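/- (Bijectivity of the basic fusion exponential, the n = 2 case of Theorem 1.) Assume additionally q % 4 = 3. Then for every pair (a, b) : G × G with (a, b) ≠ (1, 1), the map (ZMod q × ZMod q) → (G × G) given by (e, f) ↦ P (a, b) (e, f) is bijective. -/

import Mathlib

/-!
Since `G` has exponent `q`, the power `x ^ c.val` is additive and multiplicative in
`c : ZMod q`, so `P (a, b)` is a homomorphism from `(ZMod q)²` to `G²`, and it suffices that
its kernel is trivial. If `P (a, b) (u, v) = 1`, then `a ^ u = b ^ v` and `a ^ v = b ^ (-u)`,
whence `a ^ (u² + v²) = b ^ (u² + v²) = 1`. As `-1` is not a square modulo `q ≡ 3 (mod 4)`,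
`u² + v²` is invertible unless `u = v = 0`, and inverting it would force `a = b = 1`.
Injectivity then gives bijectivity because both sides have `q²` elements.
-/

theorem sq_add_sq_eq_zero_iff_of_not_isSquare_neg_one {K : Type*} [Field K]
    (hK : ¬IsSquare (-1 : K)) {u v : K} : u ^ 2 + v ^ 2 = 0 ↔ u = 0 ∧ v = 0 := by
  refine ⟨fun h => ?_, fun ⟨hu, hv⟩ => by simp [hu, hv]⟩
  have hv : v = 0 := by
    by_contra hv
    exact hK ⟨u / v, by field_simp; linear_combination -h⟩
  subst hv
  simpa using h

section ZModExponent

variable {G : Type*} [CommGroup G] {q : ℕ}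

theorem pow_eq_pow_of_natCast_eq (hG : ∀ x : G, x ^ q = 1) (x : G) {m n : ℕ}
    (h : (m : ZMod q) = n) : x ^ m = x ^ n :=
  pow_eq_pow_iff_modEq.mpr <|
    ((ZMod.natCast_eq_natCast_iff _ _ _).mp h).of_dvd (orderOf_dvd_of_pow_eq_one (hG x))

variable [NeZero q]

theorem pow_val_add (hG : ∀ x : G, x ^ q = 1) (x : G) (c d : ZMod q) :
    x ^ (c + d).val = x ^ c.val * x ^ d.val := by
  rw [← pow_add]
  exact pow_eq_pow_of_natCast_eq hG x (by simp)

theorem pow_val_mul (hG : ∀ x : G, x ^ q = 1) (x : G) (c d : ZMod q) :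
    x ^ (c * d).val = (x ^ c.val) ^ d.val := by
  rw [← pow_mul]
  exact pow_eq_pow_of_natCast_eq hG x (by simp)

theorem eq_one_of_pow_val_eq_one [Fact q.Prime] (hG : ∀ x : G, x ^ q = 1) {x : G} {c : ZMod q}
    (hc : c ≠ 0) (h : x ^ c.val = 1) : x = 1 := by
  rw [← pow_one x, ← ZMod.val_one q, ← mul_inv_cancel₀ hc, pow_val_mul hG, h, one_pow]

end ZModExponent

section FusionExp

variable {G : Type*} [CommGroup G] {q : ℕ}

def fusionExp (q : ℕ) (a b : G) (ef : ZMod q × ZMod q) : G × G :=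
  (a ^ ef.1.val * (b ^ ef.2.val)⁻¹, a ^ ef.2.val * b ^ ef.1.val)

theorem fusionExp_add [NeZero q] (hG : ∀ x : G, x ^ q = 1) (a b : G) (x y : ZMod q × ZMod q) :
    fusionExp q a b (x + y) = fusionExp q a b x * fusionExp q a b y := by
  simp only [fusionExp, Prod.fst_add, Prod.snd_add, pow_val_add hG, Prod.mk_mul_mk, mul_inv]
  congr 1 <;> ac_rfl

theorem eq_zero_of_fusionExp_eq_one [Fact q.Prime] (hG : ∀ x : G, x ^ q = 1)
    (hK : ¬IsSquare (-1 : ZMod q)) {a b : G} (hab : (a, b) ≠ 1) {x : ZMod q × ZMod q}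
    (h : fusionExp q a b x = 1) : x = 0 := by
  obtain ⟨u, v⟩ := x
  obtain ⟨hau, hav⟩ : a ^ u.val = b ^ v.val ∧ a ^ v.val = (b ^ u.val)⁻¹ := by
    simpa only [fusionExp, Prod.mk_eq_one, mul_eq_one_iff_eq_inv, inv_inv] using h
  have hbu : b ^ u.val = (a ^ v.val)⁻¹ := by rw [hav, inv_inv]
  have ha : a ^ (u * u + v * v).val = 1 := by
    rw [pow_val_add hG, pow_val_mul hG, pow_val_mul hG, hau, hav, ← pow_val_mul hG, inv_pow,
      ← pow_val_mul hG, mul_comm v u, mul_inv_cancel]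
  have hb : b ^ (u * u + v * v).val = 1 := by
    rw [pow_val_add hG, pow_val_mul hG, pow_val_mul hG, hbu, ← hau, inv_pow, ← pow_val_mul hG,
      ← pow_val_mul hG, mul_comm v u, inv_mul_cancel]
  by_contra huv
  have hw : u * u + v * v ≠ 0 := by
    rw [← sq, ← sq, Ne, sq_add_sq_eq_zero_iff_of_not_isSquare_neg_one hK]
    simpa [Prod.ext_iff] using huv
  exact hab (Prod.ext (eq_one_of_pow_val_eq_one hG hw ha) (eq_one_of_pow_val_eq_one hG hw hb))

theorem fusionExp_injective [Fact q.Prime] (hG : ∀ x : G, x ^ q = 1)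
    (hK : ¬IsSquare (-1 : ZMod q)) {a b : G} (hab : (a, b) ≠ 1) :
    Function.Injective (fusionExp q a b) := by
  intro x y hxy
  have hker : fusionExp q a b (x - y) = 1 := by
    rw [← mul_eq_right, ← fusionExp_add hG, sub_add_cancel, hxy]
  exact sub_eq_zero.mp (eq_zero_of_fusionExp_eq_one hG hK hab hker)

end FusionExp

/-- Bijectivity of the basic fusion exponential (the `n = 2` case of Theorem 1):
for `q ≡ 3 (mod 4)` and any base `(a, b) ≠ (1, 1)`, the map
`(e, f) ↦ P (a, b) (e, f)` is a bijection `(ZMod q)² → G²`. -/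
theorem basicFusionExp_bijective
    {q : ℕ} (hq : Nat.Prime q) (h3 : q % 4 = 3)
    {G : Type*} [CommGroup G] [Fintype G] (hcard : Fintype.card G = q)
    (P : G × G → ZMod q × ZMod q → G × G)
    (hP : ∀ (a b : G) (e f : ZMod q),
      P (a, b) (e, f) = (a ^ e.val * (b ^ f.val)⁻¹, a ^ f.val * b ^ e.val)) :
    ∀ (a b : G), (a, b) ≠ ((1 : G), (1 : G)) →
      Function.Bijective (fun ef : ZMod q × ZMod q => P (a, b) ef) := by
  intro a b hab
  have : Fact q.Prime := ⟨hq⟩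
  have hG : ∀ x : G, x ^ q = 1 := fun x => hcard ▸ pow_card_eq_one
  have hK : ¬IsSquare (-1 : ZMod q) := by
    rw [ZMod.exists_sq_eq_neg_one_iff, not_not]
    exact h3
  have hPF : (fun ef => P (a, b) ef) = fusionExp q a b := funext fun ⟨e, f⟩ => hP a b e f
  rw [hPF, Fintype.bijective_iff_injective_and_card]
  exact ⟨fusionExp_injective hG hK hab, by simp [hcard]⟩
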